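/- Let X be the set [0,1] × {0,1} endowed with the order topology of the lexicographic order (where (x,i) < (y,j) iff x < y, or x = y and i < j). Then the mapping r : X → X defined by r(x,i) = (x,0) is of the first Lebesgue class: for every open set V ⊆ X, the preimage r⁻¹(V) is an Fσ-set in X. -/

import Mathlib

/-- A set is an Fσ-set if it is a countable union of closed sets. -/
def IsFsigma {X : Type*} [TopologicalSpace X] (A : Set X) : Prop :=
  ∃ F : ℕ → Set X, (∀ n, IsClosed (F n)) ∧ A = ⋃ n, F n

/-- A mapping is of the first Lebesgue class if the preimage of every open set is Fσ. -/
def LebesgueClassOne {X Y : Type*} [TopologicalSpace X] [TopologicalSpace Y] (g : X → Y) : Prop :=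
  ∀ V : Set Y, IsOpen V → IsFsigma (g ⁻¹' V)

/-- `E` is an H₁-retract of `X` if there is a first Lebesgue class map `r : X → E`
fixing the points of `E`. -/
def IsH1Retract {X : Type*} [TopologicalSpace X] (E : Set X) : Prop :=
  ∃ r : X → E, (∀ x : E, r x = x) ∧ LebesgueClassOne r
/-- The double arrow space: `[0,1] × {0,1}` with the order topology of the
lexicographic order. -/
abbrev DoubleArrow : Type := ↥(Set.Icc (0:ℝ) 1) ×ₗ Fin 2

noncomputable instance : TopologicalSpace DoubleArrow := Preorder.topology DoubleArrow

instance : OrderTopology DoubleArrow := ⟨rfl⟩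

/-! The retraction factors as `r⁻¹(V) = π⁻¹(B)` through the continuous projection
`π : X → [0,1]`, where `B = {x | (x,0) ∈ V}`. As `x ↦ (x,0)` is continuous from the left, `B`
contains a left neighbourhood of each of its points; hence every point of `B \ interior B` is
isolated from the left in `B \ interior B`, which forces this set to be countable in the
second-countable order `[0,1]`. So `B` is an open set plus a countable set, an Fσ-set of `[0,1]`,
and Fσ-sets pull back along `π`. -/

open Set Filter Topology

section Fsigma

variable {X Y : Type*} [TopologicalSpace X] [TopologicalSpace Y]

theorem isFsigma_iff_isGδ_compl {A : Set X} : IsFsigma A ↔ IsGδ Aᶜ := by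
  rw [isGδ_iff_eq_iInter_nat]
  constructor
  · rintro ⟨F, hF, rfl⟩
    exact ⟨fun n => (F n)ᶜ, fun n => (hF n).isOpen_compl, compl_iUnion F⟩
  · rintro ⟨U, hU, hAU⟩
    refine ⟨fun n => (U n)ᶜ, fun n => (hU n).isClosed_compl, ?_⟩
    rw [← compl_iInter, ← hAU, compl_compl]

theorem IsFsigma.union {A B : Set X} (hA : IsFsigma A) (hB : IsFsigma B) : IsFsigma (A ∪ B) := by
  rw [isFsigma_iff_isGδ_compl, compl_union] at *
  exact hA.inter hB

theorem IsFsigma.preimage {f : X → Y} (hf : Continuous f) {A : Set Y} (hA : IsFsigma A) :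
    IsFsigma (f ⁻¹' A) := by
  rw [isFsigma_iff_isGδ_compl, ← preimage_compl] at *
  exact hA.preimage hf

theorem IsOpen.isFsigma [PerfectlyNormalSpace X] {U : Set X} (hU : IsOpen U) : IsFsigma U :=
  isFsigma_iff_isGδ_compl.2 hU.isClosed_compl.isGδ

theorem Set.Countable.isFsigma [T1Space X] {A : Set X} (hA : A.Countable) : IsFsigma A :=
  isFsigma_iff_isGδ_compl.2 hA.isGδ_compl

end Fsigma

section LinearOrder

variable {α β : Type*} [LinearOrder α] [TopologicalSpace α] [OrderTopology α]

theorem countable_diff_interior_of_mem_nhdsLE [SecondCountableTopology α] {B : Set α}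
    (hB : ∀ x ∈ B, B ∈ 𝓝[≤] x) : (B \ interior B).Countable := by
  refine (countable_setOfPred_isolated_left_within (s := B \ interior B)).mono
    fun x hx => mem_sep hx ?_
  obtain ⟨U, hUo, hxU, hUB⟩ := mem_nhdsWithin.1 (hB x hx.1)
  have hU : U ∩ Iio x ⊆ interior B :=
    interior_maximal (fun y hy => hUB ⟨hy.1, hy.2.le⟩) (hUo.inter isOpen_Iio)
  refine empty_mem_iff_bot.1 (mem_nhdsWithin.2 ⟨U, hUo, hxU, ?_⟩)
  rintro y ⟨hyU, ⟨-, hyB⟩, hyx⟩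
  exact hyB (hU ⟨hyU, hyx⟩)

variable [LinearOrder β] [TopologicalSpace (α ×ₗ β)] [OrderTopology (α ×ₗ β)]

theorem continuous_ofLex_fst [DenselyOrdered α] [Nonempty β] :
    Continuous fun p : α ×ₗ β => (ofLex p).1 :=
  Prod.Lex.monotone_fst_ofLex.continuous_of_surjective fun x =>
    ⟨toLex (x, Classical.arbitrary β), rfl⟩

theorem continuousWithinAt_toLex_bot_Iic [DenselyOrdered α] [OrderBot β] (a : α) :
    ContinuousWithinAt (fun x : α => toLex (x, (⊥ : β))) (Iic a) a := by
  refine StrictMonoOn.continuousWithinAt_left_of_exists_between (s := univ) ?_ univ_mem ?_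
  · intro x _ y _ hxy
    exact Prod.Lex.toLex_lt_toLex.2 (Or.inl hxy)
  intro b hb
  have hba : (ofLex b).1 < a := by
    rcases Prod.Lex.toLex_lt_toLex.1 hb with h | ⟨-, h⟩
    · exact h
    · exact absurd h not_lt_bot
  obtain ⟨c, hbc, hca⟩ := exists_between hba
  exact ⟨c, mem_univ c, (Prod.Lex.toLex_lt_toLex.2 (Or.inl hbc)).le,
    Prod.Lex.toLex_lt_toLex.2 (Or.inl hca)⟩

end LinearOrder

/-- The map `r(x,i) = (x,0)` on the double arrow space is of the first Lebesgue class. -/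
theorem doubleArrow_retraction_lebesgueClassOne :
    LebesgueClassOne (fun p : DoubleArrow => (toLex ((ofLex p).1, (0 : Fin 2)) : DoubleArrow)) := by
  intro V hV
  set B : Set (Icc (0:ℝ) 1) := {x | toLex (x, (0 : Fin 2)) ∈ V}
  have hB : ∀ x ∈ B, B ∈ 𝓝[≤] x := fun x hx =>
    continuousWithinAt_toLex_bot_Iic (β := Fin 2) x (hV.mem_nhds hx)
  change IsFsigma ((fun p : DoubleArrow => (ofLex p).1) ⁻¹' B)
  rw [← union_sdiff_cancel (interior_subset (s := B))]
  exact (isOpen_interior.isFsigma.union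
    (countable_diff_interior_of_mem_nhdsLE hB).isFsigma).preimage continuous_ofLex_fst
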